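/- The ternary self-dual codes NV^(1)(29) and NV^(−1)(29) of length 60 are equivalent: there exists a 60×60 monomial matrix P over 𝔽₃ such that NV^(−1)(29) = {xP : x ∈ NV^(1)(29)}. -/

import Mathlib

open Matrix

/-- Entry `χ(c)` where `b - a = c²` is a nonzero square (value `1` if `c` can be chosen a
square, i.e. `b - a` is a nonzero fourth power, `-1` if `b - a` is a nonzero square that is
not a fourth power, and `0` otherwise). -/
def RX (p : ℕ) [NeZero p] : Matrix (ZMod p) (ZMod p) ℤ :=
  Matrix.of fun a b =>
    if ∃ c : ZMod p, c ≠ 0 ∧ c ^ 2 = b - a ∧ ∃ d : ZMod p, d ^ 2 = c then 1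
    else if ∃ c : ZMod p, c ≠ 0 ∧ c ^ 2 = b - a then -1
    else 0

def RY (p : ℕ) [NeZero p] : Matrix (ZMod p) (ZMod p) ℤ :=
  Matrix.of fun a b =>
    if ∃ c : ZMod p, c ≠ 0 ∧ c ^ 2 = 2 * (b - a) ∧ ∃ d : ZMod p, d ^ 2 = c then 1
    else if ∃ c : ZMod p, c ≠ 0 ∧ c ^ 2 = 2 * (b - a) then -1
    else 0

def Xmat (p : ℕ) [NeZero p] : Matrix (Option (ZMod p)) (Option (ZMod p)) ℤ :=
  Matrix.of fun i j =>
    match i, j with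
    | none, none => 0
    | none, some _ => 1
    | some _, none => -1
    | some a, some b => RX p a b

def Ymat (p : ℕ) [NeZero p] : Matrix (Option (ZMod p)) (Option (ZMod p)) ℤ :=
  Matrix.of fun i j =>
    match i, j with
    | none, _ => 0
    | some _, none => 0
    | some a, some b => RY p a b

/-- Index set of the length `2(p+1)` code. -/
abbrev NVIdx (p : ℕ) := Option (ZMod p) ⊕ Option (ZMod p)

def Bw (p : ℕ) [NeZero p] : Matrix (NVIdx p) (NVIdx p) ℤ :=
  Matrix.fromBlocks (Xmat p) (Ymat p) (-(Ymat p)ᵀ) (Xmat p)ᵀ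

/-- Generator matrix `a I + B_w` (over `ℤ`). -/
def NVgen (p : ℕ) [NeZero p] (a : ℤ) : Matrix (NVIdx p) (NVIdx p) ℤ :=
  a • (1 : Matrix (NVIdx p) (NVIdx p) ℤ) + Bw p

/-- The ternary code `NV^(a)(p)`: the row space over `𝔽₃` of `a I + B_w` reduced mod 3. -/
def NVcode (p : ℕ) [NeZero p] (a : ℤ) : Submodule (ZMod 3) (NVIdx p → ZMod 3) :=
  Submodule.span (ZMod 3) (Set.range fun i => ((NVgen p a).map (Int.cast : ℤ → ZMod 3)) i)

/-- The matrix `H_{NV^(a)(p)}`. -/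
def Hnv (p : ℕ) [NeZero p] (a : ℤ) : Matrix (NVIdx p) (NVIdx p) ℤ :=
  Matrix.fromBlocks
    (Xmat p - (Ymat p)ᵀ + a • 1) (Ymat p + (Xmat p)ᵀ + a • 1)
    (-(Ymat p)ᵀ - Xmat p - a • 1) ((Xmat p)ᵀ - Ymat p + a • 1)

/-- Weight of a ternary vector: the number of nonzero coordinates. -/
def wt {ι : Type*} [Fintype ι] (v : ι → ZMod 3) : ℕ :=
  (Finset.univ.filter fun i => v i ≠ 0).card

/-- `H` is a Hadamard matrix of order `n`. -/
def IsHadamard {ι : Type*} [Fintype ι] [DecidableEq ι] (n : ℕ) (H : Matrix ι ι ℤ) : Prop :=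
  (∀ i j, H i j = 1 ∨ H i j = -1) ∧ H * Hᵀ = (n : ℤ) • (1 : Matrix ι ι ℤ)

instance : Fact (Nat.Prime 29) := ⟨by norm_num⟩

/-- `P` is a monomial matrix over `𝔽₃`: exactly one nonzero entry in each row and column. -/
def IsMonomial3 {κ : Type*} [DecidableEq κ] (P : Matrix κ κ (ZMod 3)) : Prop :=
  ∃ σ : Equiv.Perm κ, ∃ s : κ → ZMod 3, (∀ i, s i ≠ 0) ∧
    ∀ i j, P i j = if j = σ i then s i else 0

/-! The matrix `J = [[0, -1], [1, 0]]` is monomial. For `p ≡ 5 (mod 8)` the element `-1` is a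
square but not a fourth power of `𝔽_p`, so `χ(√(-x)) = -χ(√x)`: the blocks `X` and `Y` are
skew-symmetric, hence `B_w` anticommutes with `J`. Since `J² = -1` this gives
`J (a I + B_w) J = -a I + B_w`, and as `J` is invertible the row space of `-a I + B_w` is the image
of that of `a I + B_w` under `x ↦ x J`. -/

theorem isSquare_mul_iff_of_not_isSquare_left {F : Type*} [Field F] [Fintype F] [DecidableEq F]
    {a b : F} (ha : ¬IsSquare a) (hb : b ≠ 0) : IsSquare (a * b) ↔ ¬IsSquare b := by
  have ha0 : a ≠ 0 := by rintro rfl; exact ha IsSquare.zero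
  rw [← quadraticChar_one_iff_isSquare (mul_ne_zero ha0 hb), map_mul,
    quadraticChar_neg_one_iff_not_isSquare.mpr ha, ← quadraticChar_neg_one_iff_not_isSquare]
  omega

namespace ZMod

variable {p : ℕ} [Fact p.Prime]

theorem not_isSquare_of_sq_eq_neg_one (hp : p % 8 = 5) {i : ZMod p} (hi : i ^ 2 = -1) :
    ¬IsSquare i := by
  have : Fact (2 < p) := ⟨by omega⟩
  have hi0 : i ≠ 0 := by rintro rfl; simp at hi
  rw [euler_criterion p hi0, show p / 2 = 2 * (2 * (p / 8) + 1) by omega, pow_mul, hi,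
    Odd.neg_one_pow (odd_two_mul_add_one _)]
  exact neg_one_ne_one

/-- `χ(c)` for a square root `c` of `x`: `RX p a b = sqrtSign (b - a)` and
`RY p a b = sqrtSign (2 * (b - a))`. -/
def sqrtSign (x : ZMod p) : ℤ :=
  if ∃ c : ZMod p, c ≠ 0 ∧ c ^ 2 = x ∧ ∃ d : ZMod p, d ^ 2 = c then 1
  else if ∃ c : ZMod p, c ≠ 0 ∧ c ^ 2 = x then -1
  else 0

theorem exists_isSquare_sq_eq_sq_iff {i c : ZMod p} (hi : i ^ 2 = -1) (hc : c ≠ 0) :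
    (∃ e : ZMod p, e ≠ 0 ∧ e ^ 2 = c ^ 2 ∧ ∃ d : ZMod p, d ^ 2 = e) ↔ IsSquare c := by
  constructor
  · rintro ⟨e, -, hec, d, rfl⟩
    have hneg : IsSquare (-1 : ZMod p) := ⟨i, by rw [← hi, sq]⟩
    rcases sq_eq_sq_iff_eq_or_eq_neg.mp hec with h | h
    · exact ⟨d, by rw [← h, sq]⟩
    · rw [show c = -1 * d ^ 2 by rw [h]; ring]
      exact hneg.mul (IsSquare.sq d)
  · rintro ⟨d, rfl⟩
    exact ⟨d * d, hc, rfl, d, sq d⟩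

theorem exists_sq_eq_neg {i x : ZMod p} (hi : i ^ 2 = -1)
    (hx : ∃ c : ZMod p, c ≠ 0 ∧ c ^ 2 = x) :
    ∃ c : ZMod p, c ≠ 0 ∧ c ^ 2 = -x := by
  obtain ⟨c, hc, rfl⟩ := hx
  have hi0 : i ≠ 0 := by rintro rfl; simp at hi
  exact ⟨i * c, mul_ne_zero hi0 hc, by rw [mul_pow, hi]; ring⟩

theorem sqrtSign_neg (hp : p % 8 = 5) (x : ZMod p) : sqrtSign (-x) = -sqrtSign x := by
  obtain ⟨i, hi⟩ : ∃ i : ZMod p, i ^ 2 = -1 := by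
    obtain ⟨i, hi⟩ := exists_sq_eq_neg_one_iff.mpr (by omega : p % 4 ≠ 3)
    exact ⟨i, by rw [hi, sq]⟩
  unfold sqrtSign
  by_cases hx : ∃ c : ZMod p, c ≠ 0 ∧ c ^ 2 = x
  · obtain ⟨c, hc, rfl⟩ := hx
    have hi0 : i ≠ 0 := by rintro rfl; simp at hi
    have hic : -c ^ 2 = (i * c) ^ 2 := by rw [mul_pow, hi]; ring
    have hflip := isSquare_mul_iff_of_not_isSquare_left (not_isSquare_of_sq_eq_neg_one hp hi) hc
    have hSc : ∃ e : ZMod p, e ≠ 0 ∧ e ^ 2 = c ^ 2 := ⟨c, hc, rfl⟩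
    have hSic : ∃ e : ZMod p, e ≠ 0 ∧ e ^ 2 = (i * c) ^ 2 := ⟨i * c, mul_ne_zero hi0 hc, rfl⟩
    rw [hic]
    simp only [exists_isSquare_sq_eq_sq_iff hi hc,
      exists_isSquare_sq_eq_sq_iff hi (mul_ne_zero hi0 hc), hflip, if_pos hSc, if_pos hSic]
    split_ifs <;> simp
  · have hnx : ¬∃ c : ZMod p, c ≠ 0 ∧ c ^ 2 = -x := fun h =>
      hx (neg_neg x ▸ exists_sq_eq_neg hi h)
    rw [if_neg (fun ⟨c, hc, hcx, _⟩ => hnx ⟨c, hc, hcx⟩), if_neg hnx,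
      if_neg (fun ⟨c, hc, hcx, _⟩ => hx ⟨c, hc, hcx⟩), if_neg hx, neg_zero]

end ZMod

section SymplecticJ

variable {l R : Type*} [Fintype l] [DecidableEq l] [CommRing R]

theorem fromBlocks_mul_J_of_transpose_eq_neg {X Y : Matrix l l R} (hX : Xᵀ = -X)
    (hY : Yᵀ = -Y) :
    fromBlocks X Y (-Yᵀ) Xᵀ * J l R = -(J l R * fromBlocks X Y (-Yᵀ) Xᵀ) := by
  simp only [J, fromBlocks_multiply, fromBlocks_neg, hX, hY]
  simp

omit [Fintype l] in
theorem isMonomial3_J : IsMonomial3 (J l (ZMod 3)) := by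
  refine ⟨Equiv.sumComm l l, Sum.elim (fun _ => -1) (fun _ => 1), ?_, ?_⟩
  · rintro (i | i) <;> simp
  · rintro (i | i) (j | j) <;> simp [J, one_apply, eq_comm]
    split_ifs <;> simp

theorem span_range_row_mul_mul {n : Type*} [Fintype n] [DecidableEq n]
    {U : Matrix n n R} (hU : IsUnit U) (A P : Matrix n n R) :
    Submodule.span R (Set.range (U * A * P).row) =
      (Submodule.span R (Set.range A.row)).map P.vecMulLinear := by
  have hcomp :
      (U * A * P).vecMulLinear = P.vecMulLinear ∘ₗ A.vecMulLinear ∘ₗ U.vecMulLinear :=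
    LinearMap.ext fun x => by simp [vecMul_vecMul]
  have hsurj : LinearMap.range U.vecMulLinear = ⊤ :=
    LinearMap.range_eq_top.mpr (vecMul_surjective_iff_isUnit.mpr hU)
  rw [← range_vecMulLinear, ← range_vecMulLinear, hcomp, LinearMap.range_comp,
    LinearMap.range_comp_of_range_eq_top _ hsurj]

end SymplecticJ

section NV

variable {p : ℕ} [Fact p.Prime]

theorem RX_transpose (hp : p % 8 = 5) : (RX p)ᵀ = -RX p := by
  ext a b
  change ZMod.sqrtSign (a - b) = -ZMod.sqrtSign (b - a)
  rw [← neg_sub, ZMod.sqrtSign_neg hp]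

theorem RY_transpose (hp : p % 8 = 5) : (RY p)ᵀ = -RY p := by
  ext a b
  change ZMod.sqrtSign (2 * (a - b)) = -ZMod.sqrtSign (2 * (b - a))
  rw [← neg_sub b a, mul_neg, ZMod.sqrtSign_neg hp]

theorem Xmat_transpose (hp : p % 8 = 5) : (Xmat p)ᵀ = -Xmat p := by
  ext (_ | a) (_ | b)
  · rfl
  · rfl
  · rfl
  · exact congrFun₂ (RX_transpose hp) a b

theorem Ymat_transpose (hp : p % 8 = 5) : (Ymat p)ᵀ = -Ymat p := by
  ext (_ | a) (_ | b)
  · rfl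
  · rfl
  · rfl
  · exact congrFun₂ (RY_transpose hp) a b

theorem J_mul_NVgen_mul_J (hp : p % 8 = 5) (a : ℤ) :
    J _ ℤ * NVgen p a * J _ ℤ = NVgen p (-a) := by
  have hB : Bw p * J _ ℤ = -(J _ ℤ * Bw p) :=
    fromBlocks_mul_J_of_transpose_eq_neg (Xmat_transpose hp) (Ymat_transpose hp)
  have hsmul : J _ ℤ * (a • 1 : Matrix (NVIdx p) (NVIdx p) ℤ) * J _ ℤ = (-a) • 1 := by
    rw [Matrix.mul_smul, Matrix.mul_one, Matrix.smul_mul, J_squared, smul_neg, neg_smul]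
  have hconj : J _ ℤ * Bw p * J _ ℤ = Bw p := by
    rw [mul_assoc, hB, mul_neg, ← mul_assoc, J_squared, neg_mul, one_mul, neg_neg]
  rw [NVgen, NVgen, mul_add, add_mul, hsmul, hconj]

theorem NVcode_neg (hp : p % 8 = 5) (a : ℤ) :
    NVcode p (-a) = (NVcode p a).map (J _ (ZMod 3)).vecMulLinear := by
  have hJ : IsUnit (J (Option (ZMod p)) (ZMod 3)) :=
    (isUnit_iff_isUnit_det _).mpr (isUnit_det_J _ _)
  have hgen := congrArg (Int.castRingHom (ZMod 3)).mapMatrix (J_mul_NVgen_mul_J hp a)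
  rw [map_mul, map_mul, RingHom.mapMatrix_apply, map_J] at hgen
  have hspan :=
    span_range_row_mul_mul hJ ((Int.castRingHom (ZMod 3)).mapMatrix (NVgen p a)) (J _ _)
  rw [hgen] at hspan
  exact hspan

end NV

/-- the ternary self-dual codes `NV^(1)(29)` and `NV^(-1)(29)` of length `60`
are equivalent: there is a `60 × 60` monomial matrix `P` over `𝔽₃` with
`NV^(-1)(29) = {x P : x ∈ NV^(1)(29)}`. -/
theorem NV29_pos_equiv_neg :
    ∃ P : Matrix (NVIdx 29) (NVIdx 29) (ZMod 3), IsMonomial3 P ∧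
      (NVcode 29 (-1) : Set (NVIdx 29 → ZMod 3)) =
        (fun x => Matrix.vecMul x P) '' (NVcode 29 1 : Set (NVIdx 29 → ZMod 3)) :=
  ⟨J _ (ZMod 3), isMonomial3_J, by
    rw [NVcode_neg (by norm_num) 1, Submodule.map_coe, coe_vecMulLinear]⟩
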